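/- Let ε > 0 and let K be an n×n complex Hermitian matrix with 0 ≤ K ≤ 1 whose spectrum is ε-dense (for every x ∈ [0,1] there is an eigenvalue λ of K with |λ − x| < ε). Then Σ_{j=1}^{n} h(λ_j(K)) ≥ ⌊1/(4ε)⌋ · log 2, where λ_1(K), …, λ_n(K) are the eigenvalues of K counted with multiplicity and h(x) := −x·log x − (1−x)·log(1−x) is the binary entropy with natural logarithm (h(0) = h(1) = 0). -/

import Mathlib

open scoped Classical ComplexOrder Matrix

/-- The positive semidefinite square root of a positive semidefinite matrix
(junk value `0` if the matrix is not positive semidefinite). -/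
noncomputable def msqrt {n : Type*} [Fintype n] [DecidableEq n]
    (A : Matrix n n ℂ) : Matrix n n ℂ :=
  if h : A.PosSemidef then
    h.1.eigenvectorUnitary.1 * Matrix.diagonal ((↑) ∘ Real.sqrt ∘ h.1.eigenvalues) *
      (star h.1.eigenvectorUnitary : Matrix n n ℂ) else 0

/-- The Hilbert-Schmidt (Frobenius) norm of a matrix. -/
noncomputable def frob {n : Type*} [Fintype n]
    (M : Matrix n n ℂ) : ℝ :=
  Real.sqrt (∑ i, ∑ j, ‖M i j‖ ^ 2)

/-- `η(A,B) = ‖√(1−A)·√B − √A·√(1−B)‖₂`. -/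
noncomputable def eta {n : Type*} [Fintype n] [DecidableEq n]
    (A B : Matrix n n ℂ) : ℝ :=
  frob (msqrt (1 - A) * msqrt B - msqrt A * msqrt (1 - B))

/-- Binary entropy with natural logarithm (with the convention `h 0 = h 1 = 0`,
which holds automatically since `Real.log 0 = 0`). -/
noncomputable def binEnt (x : ℝ) : ℝ :=
  -(x * Real.log x) - (1 - x) * Real.log (1 - x)

lemma binEnt_eq (x : ℝ) : binEnt x = Real.binEntropy x := by
  simp [binEnt, Real.binEntropy, Real.log_inv]; ring

/-- The fundamental quadratic lower bound `h(x) ≥ 4 log 2 · x(1-x)`. -/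
lemma binEnt_quad {x : ℝ} (h0 : 0 ≤ x) (h1 : x ≤ 1) :
    4 * Real.log 2 * (x * (1 - x)) ≤ binEnt x := by
  rcases eq_or_lt_of_le h0 with h | h0
  · simp [binEnt, ← h]
  rcases eq_or_lt_of_le h1 with h | h1
  · simp [binEnt, h]
  set p := x
  set q := 1 - x with hq
  have hq0 : 0 < q := by simp [hq]; linarith
  have hs1 : HasSum (fun n : ℕ => p * (q ^ (n + 1) / (n + 1))) (p * (-Real.log (1 - q))) :=
    (Real.hasSum_pow_div_log_of_abs_lt_one (by rw [abs_of_pos hq0]; simp [hq]; linarith)).mul_left p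
  have hs2 : HasSum (fun n : ℕ => q * (p ^ (n + 1) / (n + 1))) (q * (-Real.log (1 - p))) :=
    (Real.hasSum_pow_div_log_of_abs_lt_one (by rw [abs_of_pos h0]; linarith)).mul_left q
  have hsh : HasSum (fun n : ℕ => p * (q ^ (n + 1) / (n + 1)) + q * (p ^ (n + 1) / (n + 1)))
      (binEnt x) := by
    have h2 := hs1.add hs2
    convert h2 using 1
    have hqp : (1 : ℝ) - q = p := by simp [hq]; rfl
    rw [hqp]
    simp only [binEnt]
    ring
  have hhalf : |(2⁻¹ : ℝ)| < 1 := by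
    rw [abs_of_pos] <;> norm_num
  have hsl : HasSum (fun n : ℕ => 4 * (p * q) * ((2⁻¹ : ℝ) ^ (n + 1) / (n + 1)))
      (4 * (p * q) * Real.log 2) := by
    have h3 := (Real.hasSum_pow_div_log_of_abs_lt_one hhalf).mul_left (4 * (p * q))
    have h4 : -Real.log (1 - 2⁻¹) = Real.log 2 := by
      rw [show (1:ℝ) - 2⁻¹ = 2⁻¹ by norm_num, Real.log_inv]; ring
    rwa [h4] at h3
  have hterm : ∀ n : ℕ, 4 * (p * q) * ((2⁻¹ : ℝ) ^ (n + 1) / (n + 1)) ≤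
      p * (q ^ (n + 1) / (n + 1)) + q * (p ^ (n + 1) / (n + 1)) := by
    intro n
    have hc := (convexOn_pow (𝕜 := ℝ) n).2 (Set.mem_Ici.2 h0.le) (Set.mem_Ici.2 hq0.le)
      (by norm_num : (0:ℝ) ≤ 1/2) (by norm_num : (0:ℝ) ≤ 1/2) (by norm_num)
    have hpm : 2 * (2⁻¹ : ℝ) ^ n ≤ p ^ n + q ^ n := by
      have hmid : (1/2 : ℝ) • p + (1/2 : ℝ) • q = 2⁻¹ := by
        simp only [smul_eq_mul, hq]; ring
      rw [hmid] at hc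
      simp only [smul_eq_mul] at hc
      linarith
    have hn : (0:ℝ) < (n:ℝ) + 1 := by positivity
    have rhs_eq : p * (q ^ (n + 1) / (n + 1)) + q * (p ^ (n + 1) / (n + 1))
        = p * q * ((q ^ n + p ^ n) / (n + 1)) := by
      rw [pow_succ, pow_succ]; ring
    have lhs_eq : 4 * (p * q) * ((2⁻¹ : ℝ) ^ (n + 1) / (n + 1))
        = p * q * ((2 * 2⁻¹ ^ n) / (n + 1)) := by
      rw [pow_succ]; ring
    rw [rhs_eq, lhs_eq]
    have hpq : 0 ≤ p * q := by positivity
    gcongr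
    linarith
  have hfin := hasSum_le hterm hsl hsh
  linarith [hfin]

lemma binEnt_ge_one_sub_sq {x : ℝ} (h0 : 0 ≤ x) (h1 : x ≤ 1) {s : ℝ} (hs : |2*x - 1| ≤ s) :
    Real.log 2 * (1 - s^2) ≤ binEnt x := by
  have hq := binEnt_quad h0 h1
  have habs := abs_le.mp hs
  have h2 : (2*x - 1)^2 ≤ s^2 := sq_le_sq' habs.1 habs.2
  have hL : 0 ≤ Real.log 2 := Real.log_nonneg (by norm_num)
  nlinarith [mul_le_mul_of_nonneg_left h2 hL]

lemma binEnt_ge_of_dist {c x : ℝ} (hc0 : 0 ≤ c) (hc : c ≤ 1/2)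
    (h : |x - 1/2| ≤ 1/2 - c) : binEnt c ≤ binEnt x := by
  rw [binEnt_eq, binEnt_eq]
  obtain ⟨hl, hr⟩ := abs_le.mp h
  rcases le_or_gt x (1/2) with hx | hx
  · exact (Real.binEntropy_strictMonoOn.monotoneOn)
      (Set.mem_Icc.2 ⟨hc0, by norm_num [hc]⟩)
      (Set.mem_Icc.2 ⟨by linarith, by rw [show (2⁻¹:ℝ) = 1/2 by norm_num]; exact hx⟩)
      (by linarith)
  · rw [← Real.binEntropy_one_sub x]
    exact (Real.binEntropy_strictMonoOn.monotoneOn)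
      (Set.mem_Icc.2 ⟨hc0, by norm_num [hc]⟩)
      (Set.mem_Icc.2 ⟨by linarith, by rw [show (2⁻¹:ℝ) = 1/2 by norm_num]; linarith⟩)
      (by linarith)

lemma binEnt_eighth : (17/32) * Real.log 2 ≤ binEnt (1/8) := by
  have h7 : Real.log 7 ≤ (79/28) * Real.log 2 := by
    have h1 : Real.log 7 = Real.log (7^28) / 28 := by
      rw [Real.log_pow]; push_cast; ring
    have h2 : Real.log ((7:ℝ)^28) ≤ Real.log ((2:ℝ)^79) :=
      Real.log_le_log (by positivity) (by norm_num)
    rw [Real.log_pow, Real.log_pow] at h2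
    rw [h1, Real.log_pow]
    push_cast at h2 ⊢
    linarith
  have he : binEnt (1/8) = 3 * Real.log 2 - (7/8) * Real.log 7 := by
    unfold binEnt
    have h18 : Real.log (1/8 : ℝ) = -(3 * Real.log 2) := by
      rw [show (1/8 : ℝ) = (2:ℝ)^(-3 : ℤ) by norm_num]
      rw [Real.log_zpow]; push_cast; ring
    have h78 : Real.log (1 - 1/8 : ℝ) = Real.log 7 - 3 * Real.log 2 := by
      rw [show (1 - 1/8 : ℝ) = 7 / 2^3 by norm_num]
      rw [Real.log_div (by norm_num) (by norm_num), Real.log_pow]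
      push_cast; ring
    rw [h18, h78]; ring
  rw [he]
  linarith [h7]

lemma sum_range_split (f : ℕ → ℝ) (a b : ℕ) :
    ∑ k ∈ Finset.range (a + b), f k
      = ∑ k ∈ Finset.range a, f k + ∑ i ∈ Finset.range b, f (a + i) := by
  induction b with
  | zero => simp
  | succ b ih =>
      rw [← Nat.add_assoc, Finset.sum_range_succ, ih, Finset.sum_range_succ]
      ring

lemma sum_cast_id (N : ℕ) : ∑ i ∈ Finset.range N, (i:ℝ) = N * (N - 1) / 2 := by
  induction N with
  | zero => simp
  | succ N ih => rw [Finset.sum_range_succ, ih]; push_cast; ring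

lemma sum_cast_sq (N : ℕ) : ∑ i ∈ Finset.range N, (i:ℝ)^2 = N * (N-1) * (2*N-1) / 6 := by
  induction N with
  | zero => simp
  | succ N ih => rw [Finset.sum_range_succ, ih]; push_cast; ring

lemma sum_abs_center (c : ℕ) :
    ∑ k ∈ Finset.range (2*c+1), |(k:ℝ) - c| = c * (c+1) := by
  have h : 2*c+1 = c + (c+1) := by omega
  rw [h, sum_range_split]
  have h1 : ∀ k ∈ Finset.range c, |(k:ℝ) - c| = (c:ℝ) - k := by
    intro k hk
    have : (k:ℝ) ≤ c := by
      have := Finset.mem_range.mp hk; exact_mod_cast this.le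
    rw [abs_of_nonpos (by linarith)]; ring
  have h2 : ∀ i ∈ Finset.range (c+1), |((c + i : ℕ):ℝ) - c| = (i:ℝ) := by
    intro i _
    push_cast
    rw [abs_of_nonneg (by linarith [Nat.cast_nonneg (α := ℝ) i] : (0:ℝ) ≤ (c:ℝ) + i - c)]
    ring
  rw [Finset.sum_congr rfl h1, Finset.sum_congr rfl h2]
  rw [Finset.sum_sub_distrib, sum_cast_id, sum_cast_id, Finset.sum_const, Finset.card_range]
  push_cast
  ring

lemma grid_weight_sum (c : ℕ) :
    ∑ k ∈ Finset.range (2*c+1), (2*|(k:ℝ) - c| + 1)^2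
      = 4 * ((c:ℝ) * (c+1) * (2*c+1) / 3) + 4 * ((c:ℝ)*(c+1)) + (2*c+1) := by
  have hpt : ∀ k ∈ Finset.range (2*c+1), (2*|(k:ℝ) - c| + 1)^2
      = 4 * ((k:ℝ)-c)^2 + 4 * |(k:ℝ)-c| + 1 := by
    intro k _
    have : |(k:ℝ) - c|^2 = ((k:ℝ)-c)^2 := sq_abs _
    nlinarith [this]
  rw [Finset.sum_congr rfl hpt]
  have hsq : ∑ k ∈ Finset.range (2*c+1), ((k:ℝ)-c)^2 = (c:ℝ)*(c+1)*(2*c+1)/3 := by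
    have expand : ∀ k ∈ Finset.range (2*c+1), ((k:ℝ)-c)^2 = (k:ℝ)^2 - 2*c*(k:ℝ) + (c:ℝ)^2 := by
      intro k _; ring
    rw [Finset.sum_congr rfl expand]
    rw [Finset.sum_add_distrib, Finset.sum_sub_distrib, sum_cast_sq,
      ← Finset.mul_sum, sum_cast_id, Finset.sum_const, Finset.card_range]
    push_cast
    ring
  rw [Finset.sum_add_distrib, Finset.sum_add_distrib, ← Finset.mul_sum, ← Finset.mul_sum,
    hsq, sum_abs_center, Finset.sum_const, Finset.card_range]
  push_cast
  ring

lemma eig_mem_Icc {n : ℕ} (K : Matrix (Fin n) (Fin n) ℂ)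
    (hK : K.PosSemidef) (hK1 : (1 - K).PosSemidef) (i : Fin n) :
    hK.1.eigenvalues i ∈ Set.Icc (0:ℝ) 1 := by
  refine ⟨hK.eigenvalues_nonneg i, ?_⟩
  have h0 := hK1.re_dotProduct_nonneg ⇑(hK.1.eigenvectorBasis i)
  have heq := hK.1.eigenvalues_eq i
  have hnorm : RCLike.re (K := ℂ) (dotProduct (star ⇑(hK.1.eigenvectorBasis i))
      ((1 : Matrix (Fin n) (Fin n) ℂ) *ᵥ ⇑(hK.1.eigenvectorBasis i))) = 1 := by
    rw [Matrix.one_mulVec, dotProduct_comm, ← EuclideanSpace.inner_eq_star_dotProduct]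
    have := hK.1.eigenvectorBasis.orthonormal.1 i
    rw [@inner_self_eq_norm_sq_to_K ℂ] at *
    simp [this]
  rw [Matrix.sub_mulVec, dotProduct_sub, map_sub, hnorm, ← heq] at h0
  linarith

set_option maxHeartbeats 3000000 in
theorem entropy_of_dense_spectrum {n : ℕ} (ε : ℝ) (hε : 0 < ε)
    (K : Matrix (Fin n) (Fin n) ℂ)
    (hK : K.PosSemidef) (hK1 : (1 - K).PosSemidef)
    (hdense : ∀ x ∈ Set.Icc (0 : ℝ) 1, ∃ j, |hK.1.eigenvalues j - x| < ε) :
    ((⌊1 / (4 * ε)⌋ : ℤ) : ℝ) * Real.log 2 ≤ ∑ j, binEnt (hK.1.eigenvalues j) := by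
  have hlog2 : (0:ℝ) < Real.log 2 := Real.log_pos (by norm_num)
  set lam : Fin n → ℝ := hK.1.eigenvalues with hlam_def
  have hlam : ∀ i, 0 ≤ lam i ∧ lam i ≤ 1 := fun i =>
    ⟨(eig_mem_Icc K hK hK1 i).1, (eig_mem_Icc K hK hK1 i).2⟩
  have hnn : ∀ i, 0 ≤ binEnt (lam i) := fun i => by
    rw [binEnt_eq]; exact Real.binEntropy_nonneg (hlam i).1 (hlam i).2
  have hsub : ∀ S : Finset (Fin n), ∑ i ∈ S, binEnt (lam i) ≤ ∑ j, binEnt (lam j) :=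
    fun S => Finset.sum_le_sum_of_subset_of_nonneg (Finset.subset_univ S)
      (fun i _ _ => hnn i)
  set m : ℤ := ⌊1 / (4 * ε)⌋ with hm_def
  have hfl : (m : ℝ) ≤ 1 / (4 * ε) := Int.floor_le _
  have hfl' : 4 * ε * (m:ℝ) ≤ 1 := by
    rw [le_div_iff₀ (by positivity)] at hfl; nlinarith
  rcases le_or_gt m 0 with hm0 | hm1
  · have hle : ((m:ℝ)) * Real.log 2 ≤ 0 :=
      mul_nonpos_of_nonpos_of_nonneg (by exact_mod_cast hm0) hlog2.le
    exact hle.trans (Finset.sum_nonneg fun i _ => hnn i)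
  have hm1' : (1:ℝ) ≤ (m:ℝ) := by exact_mod_cast hm1
  have hε4 : ε ≤ 1/4 := by nlinarith
  rcases lt_or_ge m 3 with hm3 | hm3
  · -- m = 1 or m = 2
    interval_cases m
    · -- m = 1
      obtain ⟨j0, hj0⟩ := hdense (1/2) (Set.mem_Icc.2 ⟨by norm_num, by norm_num⟩)
      obtain ⟨h0l, h0r⟩ := abs_lt.mp hj0
      rcases le_or_gt (lam j0) (1/2) with hx | hx
      · obtain ⟨j1, hj1⟩ := hdense (lam j0 + ε)
          (Set.mem_Icc.2 ⟨by linarith [(hlam j0).1], by linarith⟩)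
        obtain ⟨h1l, h1r⟩ := abs_lt.mp hj1
        have hne : j0 ≠ j1 := by
          intro h
          rw [← h] at h1l
          linarith
        have hb0 : Real.log 2 * (1 - (2*(1/2 - lam j0))^2) ≤ binEnt (lam j0) :=
          binEnt_ge_one_sub_sq (hlam j0).1 (hlam j0).2
            (by rw [abs_le]; constructor <;> linarith)
        have hb1 : Real.log 2 * (1 - (2*(2*ε - (1/2 - lam j0)))^2) ≤ binEnt (lam j1) :=
          binEnt_ge_one_sub_sq (hlam j1).1 (hlam j1).2
            (by rw [abs_le]; constructor <;> linarith)
        have haux : (2*(1/2 - lam j0))^2 + (2*(2*ε - (1/2 - lam j0)))^2 ≤ 1 := by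
          have ha0 : 0 ≤ 1/2 - lam j0 := by linarith
          have ha1 : 1/2 - lam j0 ≤ ε := by linarith
          nlinarith [mul_nonneg ha0 (by linarith : (0:ℝ) ≤ 2*ε - (1/2 - lam j0)),
            mul_nonneg (by linarith : (0:ℝ) ≤ 1/4 - ε) (by linarith : (0:ℝ) ≤ 1/4 + ε)]
        have hmulnn := mul_nonneg hlog2.le
          (by linarith :
            (0:ℝ) ≤ 1 - ((2*(1/2 - lam j0))^2 + (2*(2*ε - (1/2 - lam j0)))^2))
        have key : Real.log 2 ≤ binEnt (lam j0) + binEnt (lam j1) := by nlinarith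
        have hpair : binEnt (lam j0) + binEnt (lam j1) ≤ ∑ j, binEnt (lam j) := by
          have h5 := hsub {j0, j1}
          rwa [Finset.sum_pair hne] at h5
        push_cast
        linarith
      · obtain ⟨j1, hj1⟩ := hdense (lam j0 - ε)
          (Set.mem_Icc.2 ⟨by linarith, by linarith [(hlam j0).2]⟩)
        obtain ⟨h1l, h1r⟩ := abs_lt.mp hj1
        have hne : j0 ≠ j1 := by
          intro h
          rw [← h] at h1r
          linarith
        have hb0 : Real.log 2 * (1 - (2*(lam j0 - 1/2))^2) ≤ binEnt (lam j0) :=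
          binEnt_ge_one_sub_sq (hlam j0).1 (hlam j0).2
            (by rw [abs_le]; constructor <;> linarith)
        have hb1 : Real.log 2 * (1 - (2*(2*ε - (lam j0 - 1/2)))^2) ≤ binEnt (lam j1) :=
          binEnt_ge_one_sub_sq (hlam j1).1 (hlam j1).2
            (by rw [abs_le]; constructor <;> linarith)
        have haux : (2*(lam j0 - 1/2))^2 + (2*(2*ε - (lam j0 - 1/2)))^2 ≤ 1 := by
          have ha0 : 0 ≤ lam j0 - 1/2 := by linarith
          have ha1 : lam j0 - 1/2 ≤ ε := by linarith
          nlinarith [mul_nonneg ha0 (by linarith : (0:ℝ) ≤ 2*ε - (lam j0 - 1/2)),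
            mul_nonneg (by linarith : (0:ℝ) ≤ 1/4 - ε) (by linarith : (0:ℝ) ≤ 1/4 + ε)]
        have hmulnn := mul_nonneg hlog2.le
          (by linarith :
            (0:ℝ) ≤ 1 - ((2*(lam j0 - 1/2))^2 + (2*(2*ε - (lam j0 - 1/2)))^2))
        have key : Real.log 2 ≤ binEnt (lam j0) + binEnt (lam j1) := by nlinarith
        have hpair : binEnt (lam j0) + binEnt (lam j1) ≤ ∑ j, binEnt (lam j) := by
          have h5 := hsub {j0, j1}
          rwa [Finset.sum_pair hne] at h5
        push_cast
        linarith
    · -- m = 2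
      have hε8 : ε ≤ 1/8 := by push_cast at hfl'; nlinarith
      obtain ⟨ja, hja⟩ := hdense (1/2 - 2*ε)
        (Set.mem_Icc.2 ⟨by linarith, by linarith⟩)
      obtain ⟨jb, hjb⟩ := hdense (1/2) (Set.mem_Icc.2 ⟨by norm_num, by norm_num⟩)
      obtain ⟨jc, hjc⟩ := hdense (1/2 + 2*ε)
        (Set.mem_Icc.2 ⟨by linarith, by linarith⟩)
      obtain ⟨hal, har⟩ := abs_lt.mp hja
      obtain ⟨hbl, hbr⟩ := abs_lt.mp hjb
      obtain ⟨hcl, hcr⟩ := abs_lt.mp hjc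
      have hab : lam ja < lam jb := by linarith
      have hbc : lam jb < lam jc := by linarith
      have hac : lam ja < lam jc := by linarith
      have hne1 : ja ≠ jb := fun h => by linarith [congrArg lam h]
      have hne2 : ja ≠ jc := fun h => by linarith [congrArg lam h]
      have hne3 : jb ≠ jc := fun h => by linarith [congrArg lam h]
      have hBb : (15/16) * Real.log 2 ≤ binEnt (lam jb) := by
        have hb := binEnt_ge_one_sub_sq (hlam jb).1 (hlam jb).2 (s := 2*ε)
          (by rw [abs_le]; constructor <;> linarith)
        nlinarith [mul_nonneg hlog2.le
          (by nlinarith : (0:ℝ) ≤ 1/16 - (2*ε)^2)]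
      have hBa : (17/32) * Real.log 2 ≤ binEnt (lam ja) := by
        refine le_trans binEnt_eighth (binEnt_ge_of_dist (by norm_num) (by norm_num) ?_)
        rw [abs_le]
        constructor <;> [linarith; linarith]
      have hBc : (17/32) * Real.log 2 ≤ binEnt (lam jc) := by
        refine le_trans binEnt_eighth (binEnt_ge_of_dist (by norm_num) (by norm_num) ?_)
        rw [abs_le]
        constructor <;> [linarith; linarith]
      have htriple : binEnt (lam ja) + (binEnt (lam jb) + binEnt (lam jc))
          ≤ ∑ j, binEnt (lam j) := by
        have h5 := hsub {ja, jb, jc}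
        rwa [Finset.sum_insert (by simp [hne1, hne2]), Finset.sum_pair hne3] at h5
      push_cast
      linarith
  · -- m ≥ 3
    have hm0 : 0 ≤ m - 1 := by omega
    set c : ℕ := (m - 1).toNat with hc_def
    have hcR : ((c:ℝ)) = (m:ℝ) - 1 := by
      have : ((m - 1).toNat : ℤ) = m - 1 := Int.toNat_of_nonneg hm0
      rw [hc_def]
      exact_mod_cast congrArg (Int.cast : ℤ → ℝ) this
    have hC : (2:ℝ) ≤ (c:ℝ) := by
      rw [hcR]
      have : (3:ℝ) ≤ (m:ℝ) := by exact_mod_cast hm3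
      linarith
    have hfine : 4 * ((c:ℝ)+1) * ε ≤ 1 := by
      rw [hcR]; nlinarith
    have hpt : ∀ k : Fin (2*c+1),
        (1/2 + (2*((k:ℕ):ℝ) - 2*(c:ℝ))*ε) ∈ Set.Icc (0:ℝ) 1 := by
      intro k
      have hk2c : ((k:ℕ):ℝ) ≤ 2*(c:ℝ) := by
        have hlt := k.isLt
        have : (k:ℕ) ≤ 2*c := by omega
        exact_mod_cast this
      have hk0 : (0:ℝ) ≤ ((k:ℕ):ℝ) := Nat.cast_nonneg _
      constructor
      · nlinarith [mul_nonneg hk0 hε.le]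
      · nlinarith [mul_nonneg (by linarith : (0:ℝ) ≤ 2*(c:ℝ) - ((k:ℕ):ℝ)) hε.le]
    choose jj hjj using fun k : Fin (2*c+1) => hdense _ (hpt k)
    have hinj : Function.Injective jj := by
      intro k1 k2 h
      have h1 := abs_lt.mp (hjj k1)
      have h2 := abs_lt.mp (hjj k2)
      rw [h] at h1
      have hd : |((k1:ℕ):ℝ) - ((k2:ℕ):ℝ)| < 1 := by
        rw [abs_lt]
        constructor <;> nlinarith [h1.1, h1.2, h2.1, h2.2, hε]
      obtain ⟨hd1, hd2⟩ := abs_lt.mp hd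
      have n1 : ((k1:ℕ):ℝ) < ((k2:ℕ):ℝ) + 1 := by linarith
      have n2 : ((k2:ℕ):ℝ) < ((k1:ℕ):ℝ) + 1 := by linarith
      have n1' : (k1:ℕ) < (k2:ℕ) + 1 := by exact_mod_cast n1
      have n2' : (k2:ℕ) < (k1:ℕ) + 1 := by exact_mod_cast n2
      exact Fin.ext (by omega)
    have hsum1 : ∑ k : Fin (2*c+1), binEnt (lam (jj k)) ≤ ∑ j, binEnt (lam j) := by
      have him : ∑ i ∈ (Finset.univ : Finset (Fin (2*c+1))).image jj, binEnt (lam i)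
          = ∑ k : Fin (2*c+1), binEnt (lam (jj k)) :=
        Finset.sum_image (fun a _ b _ hab => hinj hab)
      rw [← him]
      exact hsub _
    have hptb : ∀ k : Fin (2*c+1),
        Real.log 2 * (1 - (2*(2*|((k:ℕ):ℝ) - (c:ℝ)| + 1)*ε)^2) ≤ binEnt (lam (jj k)) := by
      intro k
      apply binEnt_ge_one_sub_sq (hlam _).1 (hlam _).2
      obtain ⟨hl, hr⟩ := abs_lt.mp (hjj k)
      have e1 : (((k:ℕ):ℝ) - (c:ℝ)) * ε ≤ |((k:ℕ):ℝ) - (c:ℝ)| * ε :=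
        mul_le_mul_of_nonneg_right (le_abs_self _) hε.le
      have e2 : -(|((k:ℕ):ℝ) - (c:ℝ)| * ε) ≤ (((k:ℕ):ℝ) - (c:ℝ)) * ε := by
        have := mul_le_mul_of_nonneg_right (neg_abs_le (((k:ℕ):ℝ) - (c:ℝ))) hε.le
        linarith [this]
      rw [abs_le]
      constructor <;> nlinarith [abs_nonneg (((k:ℕ):ℝ) - (c:ℝ))]
    have hptsum : ∑ k : Fin (2*c+1),
        Real.log 2 * (1 - (2*(2*|((k:ℕ):ℝ) - (c:ℝ)| + 1)*ε)^2)
        = Real.log 2 * ((2*(c:ℝ)+1)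
          - 4*ε^2 * (4 * ((c:ℝ) * ((c:ℝ)+1) * (2*(c:ℝ)+1) / 3)
            + 4 * ((c:ℝ)*((c:ℝ)+1)) + (2*(c:ℝ)+1))) := by
      rw [Fin.sum_univ_eq_sum_range
        (fun k => Real.log 2 * (1 - (2*(2*|(k:ℝ) - (c:ℝ)| + 1)*ε)^2))]
      have e : ∀ k ∈ Finset.range (2*c+1),
          Real.log 2 * (1 - (2*(2*|(k:ℝ) - (c:ℝ)| + 1)*ε)^2)
          = Real.log 2 - (Real.log 2 * (4*ε^2)) * (2*|(k:ℝ) - (c:ℝ)| + 1)^2 := by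
        intro k _; ring
      rw [Finset.sum_congr rfl e, Finset.sum_sub_distrib, Finset.sum_const,
        Finset.card_range, ← Finset.mul_sum, grid_weight_sum]
      push_cast
      ring
    have hW : 4 * ((c:ℝ) * ((c:ℝ)+1) * (2*(c:ℝ)+1) / 3) + 4 * ((c:ℝ)*((c:ℝ)+1))
        + (2*(c:ℝ)+1) ≤ 4*(c:ℝ)*((c:ℝ)+1)^2 := by
      nlinarith [hC, mul_nonneg (mul_nonneg (by linarith : (0:ℝ) ≤ (c:ℝ))
        (by linarith : (0:ℝ) ≤ (c:ℝ)+1)) (by linarith : (0:ℝ) ≤ (c:ℝ)-2)]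
    have h1 : (4*((c:ℝ)+1)*ε)^2 ≤ 1 := by
      have hpos : 0 < 4*((c:ℝ)+1)*ε := by positivity
      nlinarith
    have hfinal : (m:ℝ) ≤ (2*(c:ℝ)+1)
        - 4*ε^2 * (4 * ((c:ℝ) * ((c:ℝ)+1) * (2*(c:ℝ)+1) / 3)
          + 4 * ((c:ℝ)*((c:ℝ)+1)) + (2*(c:ℝ)+1)) := by
      have hp1 := mul_le_mul_of_nonneg_left hW (by positivity : (0:ℝ) ≤ 4*ε^2)
      have hp2 := mul_le_mul_of_nonneg_left h1 (by linarith : (0:ℝ) ≤ (c:ℝ))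
      rw [hcR] at *
      nlinarith [hp1, hp2]
    have hge : Real.log 2 * ((2*(c:ℝ)+1)
        - 4*ε^2 * (4 * ((c:ℝ) * ((c:ℝ)+1) * (2*(c:ℝ)+1) / 3)
          + 4 * ((c:ℝ)*((c:ℝ)+1)) + (2*(c:ℝ)+1)))
        ≤ ∑ k : Fin (2*c+1), binEnt (lam (jj k)) := by
      rw [← hptsum]
      exact Finset.sum_le_sum (fun k _ => hptb k)
    have hstep : (m:ℝ) * Real.log 2 ≤ Real.log 2 * ((2*(c:ℝ)+1)
        - 4*ε^2 * (4 * ((c:ℝ) * ((c:ℝ)+1) * (2*(c:ℝ)+1) / 3)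
          + 4 * ((c:ℝ)*((c:ℝ)+1)) + (2*(c:ℝ)+1))) := by
      nlinarith [hfinal, hlog2]
    linarith
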